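/- arXiv:math/0506603 — 8 statements merged into one kernel-verified Lean document; each statement's English description precedes it below -/
import Mathlib

section
/- If A and B are commutative rings such that the category of A-modules is equivalent to the category of B-modules (A and B are Morita equivalent), then A and B are isomorphic as rings. -/
/-!
The center `End (𝟭 (ModuleCat R))` of the module category of a commutative ring `R` is `R` itself:
by naturality along the maps `R → M, 1 ↦ x`, a natural endomorphism of the identity functor is
multiplication by its value on `1 ∈ R`. An equivalence of module categories preserves binary
products, hence is additive, so conjugating by it gives a ring isomorphism of the centers.
-/

open CategoryTheory

universe u

namespace CategoryTheory

variable {C D : Type*} [Category C] [Category D] [Preadditive C] [Preadditive D]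

def Iso.conjRingEquiv {X Y : C} (α : X ≅ Y) : End X ≃+* End Y where
  __ := α.conj
  map_add' f g := by
    change α.inv ≫ (f + g : X ⟶ X) ≫ α.hom = α.inv ≫ f ≫ α.hom + α.inv ≫ g ≫ α.hom
    rw [Preadditive.add_comp, Preadditive.comp_add]

noncomputable def Functor.FullyFaithful.ringEquivEnd {F : C ⥤ D} [F.Additive]
    (hF : F.FullyFaithful) (X : C) : End X ≃+* End (F.obj X) where
  __ := hF.mulEquivEnd X
  map_add' f g := F.map_add (f := f) (g := g)

namespace Equivalence

variable {E : Type*} [Category E] (e : C ≌ D) [e.functor.Additive]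

instance : (e.congrRight (E := E)).functor.Additive :=
  inferInstanceAs ((Functor.whiskeringRight E C D).obj e.functor).Additive

instance [Preadditive E] : (e.congrLeft (E := E)).functor.Additive :=
  inferInstanceAs ((Functor.whiskeringLeft D C E).obj e.inverse).Additive

noncomputable def catCenterRingEquiv : CatCenter C ≃+* CatCenter D :=
  let endoEquiv := e.congrRight.trans (e.congrLeft (E := D))
  have : endoEquiv.functor.Additive :=
    inferInstanceAs (e.congrRight.functor ⋙ e.congrLeft.functor).Additive
  (endoEquiv.fullyFaithfulFunctor.ringEquivEnd (𝟭 C)).trans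
    (Functor.isoWhiskerLeft e.inverse e.functor.leftUnitor ≪≫ e.counitIso).conjRingEquiv

end Equivalence

end CategoryTheory

namespace ModuleCat

noncomputable def catCenterRingEquiv (R : Type u) [CommRing R] :
    R ≃+* CatCenter (ModuleCat.{u} R) where
  __ := Linear.toCatCenter R (ModuleCat.{u} R)
  invFun z := (z.app (ModuleCat.of R R)).hom 1
  left_inv r := by simp
  right_inv z := by
    ext M x
    have hx := congr($(z.naturality (ModuleCat.ofHom (LinearMap.toSpanSingleton R M x))).hom 1)
    simpa using hx.symm

end ModuleCat

/-- Morita equivalent commutative rings are isomorphic. -/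
theorem commRing_isom_of_moritaEquivalent (A B : Type u) [CommRing A] [CommRing B]
    (e : ModuleCat.{u} A ≌ ModuleCat.{u} B) : Nonempty (A ≃+* B) :=
  have : e.functor.Additive := e.functor.additive_of_preserves_binary_products
  ⟨(ModuleCat.catCenterRingEquiv A).trans <|
    e.catCenterRingEquiv.trans (ModuleCat.catCenterRingEquiv B).symm⟩
end

section
/- Let k be a field, A an associative unital k-algebra, and n ≥ 1. For a k-algebra R, let [R, R] denote the k-linear span of all commutators x y − y x, x, y ∈ R. Then the trace map tr : Mat_n(A) → A, (a_{ij}) ↦ Σ_{i} a_{ii}, carries [Mat_n(A), Mat_n(A)] into [A, A], and the induced k-linear map Mat_n(A) / [Mat_n(A), Mat_n(A)] → A / [A, A] is an isomorphism of k-vector spaces. -/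
/-! Modulo commutators, `E_ij a ≡ 0` for `i ≠ j` (as `[E_ij a, E_jj 1]`) and
`E_ii a ≡ E_00 a` (as `[E_i0 a, E_0i 1]`), so every matrix is congruent to `E_00 (tr M)`.
Since `a ↦ E_00 a` is multiplicative, it maps `[A, A]` into `[Matₙ(A), Matₙ(A)]`; hence a matrix
lies in `[Matₙ(A), Matₙ(A)]` exactly when its trace lies in `[A, A]`, which together with
surjectivity of the trace makes the induced map bijective. -/

open Matrix

/-- The `k`-linear span of commutators `x*y - y*x` in a `k`-algebra `R`. -/
def commutatorSubmodule (k : Type*) [Field k] (R : Type*) [Ring R] [Algebra k R] :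
    Submodule k R :=
  Submodule.span k {x : R | ∃ p q : R, x = p * q - q * p}

namespace Submodule

variable {R M N : Type*} [Ring R] [AddCommGroup M] [Module R M] [AddCommGroup N] [Module R N]

theorem mapQ_bijective_of_surjective_of_comap_eq {p : Submodule R M} {q : Submodule R N}
    {f : M →ₗ[R] N} (hf : Function.Surjective f) (hpq : q.comap f = p) (h : p ≤ q.comap f) :
    Function.Bijective (p.mapQ q f h) := by
  refine ⟨?_, ?_⟩
  · rw [← LinearMap.ker_eq_bot, ker_mapQ, hpq, mkQ_map_self]
  · rw [← LinearMap.range_eq_top, range_mapQ, LinearMap.range_eq_top_of_surjective f hf,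
      ← LinearMap.range_eq_map, range_mkQ]

end Submodule

section commutatorSubmodule

variable {k : Type*} [Field k] {R S : Type*} [Ring R] [Algebra k R] [Ring S] [Algebra k S]

theorem mul_sub_mul_mem_commutatorSubmodule (p q : R) :
    p * q - q * p ∈ commutatorSubmodule k R :=
  Submodule.subset_span ⟨p, q, rfl⟩

theorem commutatorSubmodule_le_comap_of_map_mul (f : R →ₗ[k] S)
    (hf : ∀ x y, f (x * y) = f x * f y) :
    commutatorSubmodule k R ≤ (commutatorSubmodule k S).comap f := by
  rw [commutatorSubmodule, Submodule.span_le]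
  rintro _ ⟨p, q, rfl⟩
  simpa only [SetLike.mem_coe, Submodule.mem_comap, map_sub, hf]
    using mul_sub_mul_mem_commutatorSubmodule (f p) (f q)

end commutatorSubmodule

namespace Matrix

variable {k : Type*} [Field k] {A : Type*} [Ring A] [Algebra k A]
  {l m : Type*} [Fintype l] [Fintype m]

theorem trace_mul_sub_trace_mul_mem_commutatorSubmodule (P : Matrix m l A) (Q : Matrix l m A) :
    (P * Q).trace - (Q * P).trace ∈ commutatorSubmodule k A := by
  have hQP : (Q * P).trace = ∑ i, ∑ j, Q j i * P i j := by
    simp only [trace, diag, mul_apply]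
    exact Finset.sum_comm
  rw [hQP, trace, ← Finset.sum_sub_distrib]
  refine Submodule.sum_mem _ fun i _ => ?_
  rw [diag_apply, mul_apply, ← Finset.sum_sub_distrib]
  exact Submodule.sum_mem _ fun j _ => mul_sub_mul_mem_commutatorSubmodule _ _

variable (k A m) [DecidableEq m]

theorem commutatorSubmodule_le_comap_traceLinearMap :
    commutatorSubmodule k (Matrix m m A) ≤
      (commutatorSubmodule k A).comap (traceLinearMap m k A) := by
  rw [commutatorSubmodule, Submodule.span_le]
  rintro _ ⟨P, Q, rfl⟩
  simpa only [SetLike.mem_coe, Submodule.mem_comap, map_sub, traceLinearMap_apply]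
    using trace_mul_sub_trace_mul_mem_commutatorSubmodule P Q

variable {k A m}

theorem single_sub_single_trace_mem_commutatorSubmodule (i₀ i j : m) (a : A) :
    single i j a - single i₀ i₀ (single i j a).trace ∈ commutatorSubmodule k (Matrix m m A) := by
  by_cases hij : i = j
  · subst hij
    simpa only [single_mul_single_same, mul_one, one_mul, trace_single_eq_same]
      using mul_sub_mul_mem_commutatorSubmodule (k := k) (single i i₀ a) (single i₀ i 1)
  · simpa only [single_mul_single_same, single_mul_single_of_ne (1 : A) j j i (Ne.symm hij),
      mul_one, trace_single_eq_of_ne _ _ _ hij, single_zero, sub_zero]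
      using mul_sub_mul_mem_commutatorSubmodule (k := k) (single i j a) (single j j 1)

theorem sub_single_trace_mem_commutatorSubmodule (i₀ : m) (M : Matrix m m A) :
    M - single i₀ i₀ M.trace ∈ commutatorSubmodule k (Matrix m m A) := by
  let φ : Matrix m m A →ₗ[k] Matrix m m A :=
    LinearMap.id - (singleLinearMap k i₀ i₀).comp (traceLinearMap m k A)
  have hφ : M - single i₀ i₀ M.trace = ∑ i, ∑ j, φ (single i j (M i j)) := by
    simp only [← map_sum, ← matrix_eq_sum_single]
    rfl
  rw [hφ]
  exact Submodule.sum_mem _ fun i _ => Submodule.sum_mem _ fun j _ =>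
    single_sub_single_trace_mem_commutatorSubmodule i₀ i j (M i j)

variable (k A m)

theorem comap_traceLinearMap_commutatorSubmodule [Nonempty m] :
    (commutatorSubmodule k A).comap (traceLinearMap m k A) =
      commutatorSubmodule k (Matrix m m A) := by
  refine le_antisymm (fun M hM => ?_) (commutatorSubmodule_le_comap_traceLinearMap k A m)
  let i₀ : m := Classical.arbitrary m
  have hsingle := commutatorSubmodule_le_comap_of_map_mul (singleLinearMap k i₀ i₀)
    (fun x y => (single_mul_single_same (c := x) i₀ i₀ i₀ y).symm) hM
  simpa only [singleLinearMap_apply, traceLinearMap_apply, sub_add_cancel]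
    using Submodule.add_mem _ (sub_single_trace_mem_commutatorSubmodule i₀ M) hsingle

end Matrix

/-- The trace `Matₙ(A) → A` maps `[Matₙ(A), Matₙ(A)]` into `[A, A]`,
and induces a `k`-linear isomorphism `Matₙ(A)/[Matₙ(A), Matₙ(A)] ≅ A/[A,A]`. -/
theorem trace_commutator_quotient_bijective
    (k : Type*) [Field k] (A : Type*) [Ring A] [Algebra k A] (n : ℕ) (hn : 1 ≤ n) :
    ∃ h : commutatorSubmodule k (Matrix (Fin n) (Fin n) A) ≤
        (commutatorSubmodule k A).comap (Matrix.traceLinearMap (Fin n) k A),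
      Function.Bijective
        (Submodule.mapQ (commutatorSubmodule k (Matrix (Fin n) (Fin n) A))
          (commutatorSubmodule k A) (Matrix.traceLinearMap (Fin n) k A) h) := by
  have : Nonempty (Fin n) := ⟨⟨0, hn⟩⟩
  exact ⟨commutatorSubmodule_le_comap_traceLinearMap k A (Fin n),
    Submodule.mapQ_bijective_of_surjective_of_comap_eq trace_surjective
      (comap_traceLinearMap_commutatorSubmodule k A (Fin n)) _⟩
end

section
/- Let k be a field, n ≥ 1, R an associative unital k-algebra, and ι : Mat_n(k) → R a unital k-algebra homomorphism. Let C = { r ∈ R : r · ι(m) = ι(m) · r for all m ∈ Mat_n(k) } be the centralizer of the image of ι, a k-subalgebra of R. Then the map Mat_n(k) ⊗_k C → R determined by m ⊗ r ↦ ι(m) · r is an isomorphism of k-algebras, where Mat_n(k) ⊗_k C carries the tensor product algebra structure. -/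
/-!
The elements `e i j = ι (single i j 1)` form a full system of matrix units in `R`. For `r : R`
the elements `r i j = ∑ l, e l i * r * e j l` satisfy `e p q * r i j = e p i * r * e j q =
r i j * e p q`, so they lie in the centralizer `C`, and `r ↦ ∑ e i j ⊗ r i j` inverts
`m ⊗ c ↦ ι m * c`: one composite sends `r` to `(∑ e i i) * r * (∑ e j j) = r`, the other
recovers `m ⊗ c` because `∑ l, e l i * ι m * e j l = ι (m i j • 1)`.
-/

open TensorProduct Matrix

namespace AlgHom

variable {K N R : Type*} [CommSemiring K] [Fintype N] [DecidableEq N] [Semiring R] [Algebra K R]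
  (ι : Matrix N N K →ₐ[K] R)

theorem commute_of_forall_commute_map_single {x : R}
    (hx : ∀ i j, Commute (ι (single i j 1)) x) (m : Matrix N N K) : Commute (ι m) x := by
  induction m using Matrix.induction_on' with
  | h_zero => simp
  | h_add p q hp hq => simpa only [map_add] using hp.add_left hq
  | h_std_basis i j a =>
    rw [← mul_one a, ← smul_eq_mul, ← smul_single, map_smul]
    exact (hx i j).smul_left a

/-- If `ι` identifies `R` with `Matₙ(C)`, this is the `(i, j)` entry of `r`, as a scalar matrix. -/
noncomputable def matrixEntry (r : R) (i j : N) : R :=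
  ∑ l, ι (single l i 1) * r * ι (single j l 1)

theorem map_single_mul_matrixEntry (r : R) (p q i j : N) :
    ι (single p q 1) * ι.matrixEntry r i j = ι (single p i 1) * r * ι (single j q 1) := by
  rw [matrixEntry, Finset.mul_sum, Finset.sum_eq_single q]
  · simp only [← mul_assoc, ← map_mul, single_mul_single_same, one_mul]
  · intro l _ hl
    rw [← mul_assoc, ← mul_assoc, ← map_mul, single_mul_single_of_ne (h := Ne.symm hl),
      map_zero, zero_mul, zero_mul]
  · simp

theorem matrixEntry_mul_map_single (r : R) (p q i j : N) :
    ι.matrixEntry r i j * ι (single p q 1) = ι (single p i 1) * r * ι (single j q 1) := by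
  rw [matrixEntry, Finset.sum_mul, Finset.sum_eq_single p]
  · rw [mul_assoc, ← map_mul, single_mul_single_same, one_mul]
  · intro l _ hl
    rw [mul_assoc, ← map_mul, single_mul_single_of_ne (h := hl), map_zero, mul_zero]
  · simp

theorem matrixEntry_mem_centralizer (r : R) (i j : N) :
    ι.matrixEntry r i j ∈ Subalgebra.centralizer K (Set.range ι) := by
  rintro _ ⟨m, rfl⟩
  refine (ι.commute_of_forall_commute_map_single (fun p q => ?_) m).eq
  exact (ι.map_single_mul_matrixEntry r p q i j).trans (ι.matrixEntry_mul_map_single r p q i j).symm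

theorem matrixEntry_map_mul {c : R} (hc : c ∈ Subalgebra.centralizer K (Set.range ι))
    (m : Matrix N N K) (i j : N) : ι.matrixEntry (ι m * c) i j = m i j • c := by
  have hcomm (l : N) :
      ι (single l i 1) * (ι m * c) * ι (single j l 1) = ι (single l l (m i j)) * c := by
    rw [mul_assoc, mul_assoc, ← hc _ ⟨_, rfl⟩, ← mul_assoc, ← mul_assoc, ← map_mul, ← map_mul,
      single_mul_mul_single, one_mul, mul_one]
  rw [matrixEntry, Finset.sum_congr rfl fun l _ => hcomm l, ← Finset.sum_mul, ← map_sum,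
    sum_single_eq_diagonal, Algebra.smul_def, ← ι.commutes, algebraMap_eq_diagonal]
  rfl

theorem sum_map_single_mul_matrixEntry (r : R) :
    ∑ i, ∑ j, ι (single i j 1) * ι.matrixEntry r i j = r := by
  simp only [map_single_mul_matrixEntry]
  calc ∑ i, ∑ j, ι (single i i 1) * r * ι (single j j 1)
      = (∑ i, ι (single i i 1)) * r * ∑ j, ι (single j j 1) := by
        rw [Finset.sum_mul, Finset.sum_mul_sum]
    _ = r := by rw [← map_sum, sum_single_one, map_one, one_mul, mul_one]

noncomputable def mulCentralizer :
    Matrix N N K ⊗[K] Subalgebra.centralizer K (Set.range ι) →ₐ[K] R :=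
  Algebra.TensorProduct.lift ι (Subalgebra.centralizer K (Set.range ι)).val
    fun m c => c.2 (ι m) ⟨m, rfl⟩

@[simp]
theorem mulCentralizer_tmul (m : Matrix N N K) (c : Subalgebra.centralizer K (Set.range ι)) :
    ι.mulCentralizer (m ⊗ₜ c) = ι m * c :=
  Algebra.TensorProduct.lift_tmul _ _ _ _ _

noncomputable def toMatrixTensorCentralizer :
    R →ₗ[K] Matrix N N K ⊗[K] Subalgebra.centralizer K (Set.range ι) where
  toFun r := ∑ i, ∑ j, single i j 1 ⊗ₜ ⟨ι.matrixEntry r i j, ι.matrixEntry_mem_centralizer r i j⟩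
  map_add' a b := by
    simp only [← Finset.sum_add_distrib, ← tmul_add]
    congr! with i _ j _
    simp [matrixEntry, mul_add, add_mul, Finset.sum_add_distrib]
  map_smul' a r := by
    simp only [Finset.smul_sum, ← tmul_smul]
    congr! with i _ j _
    simp [matrixEntry, Finset.smul_sum]

theorem toMatrixTensorCentralizer_mulCentralizer
    (x : Matrix N N K ⊗[K] Subalgebra.centralizer K (Set.range ι)) :
    ι.toMatrixTensorCentralizer (ι.mulCentralizer x) = x := by
  induction x using TensorProduct.induction_on with
  | zero => simp
  | add x y hx hy => rw [map_add, map_add, hx, hy]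
  | tmul m c =>
    have hentry (i j : N) : (⟨ι.matrixEntry (ι m * c) i j, ι.matrixEntry_mem_centralizer _ i j⟩ :
        Subalgebra.centralizer K (Set.range ι)) = m i j • c :=
      Subtype.ext (ι.matrixEntry_map_mul c.2 m i j)
    conv_rhs => rw [matrix_eq_sum_single m]
    simp only [mulCentralizer_tmul, toMatrixTensorCentralizer, LinearMap.coe_mk, AddHom.coe_mk,
      hentry, tmul_smul, smul_tmul', smul_single, smul_eq_mul, mul_one, sum_tmul]

theorem mulCentralizer_toMatrixTensorCentralizer (r : R) :
    ι.mulCentralizer (ι.toMatrixTensorCentralizer r) = r := by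
  simpa [toMatrixTensorCentralizer] using ι.sum_map_single_mul_matrixEntry r

noncomputable def matrixTensorCentralizerEquiv :
    Matrix N N K ⊗[K] Subalgebra.centralizer K (Set.range ι) ≃ₐ[K] R :=
  AlgEquiv.ofBijective ι.mulCentralizer <| Function.bijective_iff_has_inverse.2
    ⟨ι.toMatrixTensorCentralizer, ι.toMatrixTensorCentralizer_mulCentralizer,
      ι.mulCentralizer_toMatrixTensorCentralizer⟩

end AlgHom

theorem matrix_tensor_centralizer_iso_general
    (k : Type*) [Field k] (n : ℕ)
    (R : Type*) [Ring R] [Algebra k R]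
    (ι : Matrix (Fin n) (Fin n) k →ₐ[k] R) :
    ∃ e : (Matrix (Fin n) (Fin n) k) ⊗[k]
        (Subalgebra.centralizer k (Set.range ι) : Subalgebra k R) ≃ₐ[k] R,
      ∀ (m : Matrix (Fin n) (Fin n) k)
        (r : (Subalgebra.centralizer k (Set.range ι) : Subalgebra k R)),
        e (m ⊗ₜ[k] r) = ι m * (r : R) :=
  ⟨ι.matrixTensorCentralizerEquiv, ι.mulCentralizer_tmul⟩

/-- If `ι : Matₙ(k) → R` is a unital `k`-algebra map and `C` is the
centralizer of its image, then `m ⊗ r ↦ ι(m) * r` is a `k`-algebra isomorphism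
`Matₙ(k) ⊗ₖ C ≅ R`. -/
theorem matrix_tensor_centralizer_iso
    (k : Type*) [Field k] (n : ℕ) (hn : 1 ≤ n)
    (R : Type*) [Ring R] [Algebra k R]
    (ι : Matrix (Fin n) (Fin n) k →ₐ[k] R) :
    ∃ e : (Matrix (Fin n) (Fin n) k) ⊗[k]
        (Subalgebra.centralizer k (Set.range ι) : Subalgebra k R) ≃ₐ[k] R,
      ∀ (m : Matrix (Fin n) (Fin n) k)
        (r : (Subalgebra.centralizer k (Set.range ι) : Subalgebra k R)),
        e (m ⊗ₜ[k] r) = ι m * (r : R) :=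
  matrix_tensor_centralizer_iso_general k n R ι
end

section
/- Let k be a field, A a finitely generated associative unital k-algebra, and n ≥ 1. Then there exist a finitely generated commutative k-algebra R and a k-algebra homomorphism rep : A → Mat_n(R) with the following universal property: for every commutative k-algebra B and every k-algebra homomorphism ρ : A → Mat_n(B), there exists a unique k-algebra homomorphism ψ : R → B such that applying ψ to each matrix entry of rep(a) yields ρ(a) for every a ∈ A. -/
/-!
A representation of the free algebra `k⟨xᵢ⟩` in `Matₙ(B)` is a free choice of one matrix per
generator, i.e. of the `n²` entries `x_{i,p,q} ∈ B`; so the generic matrices `(X_{i,p,q})` over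
the polynomial ring `k[X_{i,p,q}]` form the universal representation of `k⟨xᵢ⟩`. Writing `A` as a
quotient `π : k⟨xᵢ⟩ ↠ A` of a free algebra on finitely many generators, a representation of `A`
is one of `k⟨xᵢ⟩` killing `ker π`; dividing `k[X_{i,p,q}]` by the ideal generated by the entries
of the generic images of `ker π` therefore represents the functor for `A`.
-/

open Function MvPolynomial

namespace RepScheme

variable {k : Type*} [CommRing k] {ι : Type*} {n : Type*} [Fintype n] [DecidableEq n]
  {B : Type*} [CommRing B] [Algebra k B]

section Free

variable (k ι n) in
noncomputable def genericRep :
    FreeAlgebra k ι →ₐ[k] Matrix n n (MvPolynomial (ι × n × n) k) :=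
  FreeAlgebra.lift k fun i => Matrix.of fun p q => X (i, p, q)

@[simp]
lemma genericRep_ι (i : ι) (p q : n) : genericRep k ι n (FreeAlgebra.ι k i) p q = X (i, p, q) := by
  simp [genericRep]

lemma bijective_mapMatrix_comp_genericRep :
    Bijective fun ψ : MvPolynomial (ι × n × n) k →ₐ[k] B => ψ.mapMatrix.comp (genericRep k ι n) := by
  refine ⟨fun ψ₁ ψ₂ h => algHom_ext fun ⟨i, p, q⟩ => ?_, fun ρ => ?_⟩
  · simpa using congr($h (FreeAlgebra.ι k i) p q)
  · refine ⟨aeval fun v => ρ (FreeAlgebra.ι k v.1) v.2.1 v.2.2, FreeAlgebra.hom_ext ?_⟩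
    ext i p q
    simp

end Free

section Descent

variable {F A R₀ : Type*} [Ring F] [Algebra k F] [Ring A] [Algebra k A]
  [CommRing R₀] [Algebra k R₀] (rep₀ : F →ₐ[k] Matrix n n R₀) (π : F →ₐ[k] A)

def repIdeal : Ideal R₀ :=
  Ideal.span {r | ∃ x ∈ RingHom.ker π, ∃ p q, rep₀ x p q = r}

lemma repIdeal_le_ker (ψ : R₀ →ₐ[k] B) (h : ∀ x ∈ RingHom.ker π, (rep₀ x).map ψ = 0) :
    repIdeal rep₀ π ≤ RingHom.ker ψ := by
  refine Ideal.span_le.mpr ?_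
  rintro _ ⟨x, hx, p, q, rfl⟩
  simpa using congr($(h x hx) p q)

lemma mapMatrix_mkₐ_repIdeal_eq_zero {x : F} (hx : x ∈ RingHom.ker π) :
    (Ideal.Quotient.mkₐ k (repIdeal rep₀ π)).mapMatrix (rep₀ x) = 0 := by
  ext p q
  exact Ideal.Quotient.eq_zero_iff_mem.mpr (Ideal.subset_span ⟨x, hx, p, q, rfl⟩)

noncomputable def descendRep {π : F →ₐ[k] A} (hπ : Surjective π) :
    A →ₐ[k] Matrix n n (R₀ ⧸ repIdeal rep₀ π) :=
  (Ideal.Quotient.liftₐ (RingHom.ker π)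
      ((Ideal.Quotient.mkₐ k (repIdeal rep₀ π)).mapMatrix.comp rep₀)
      fun _ hx => mapMatrix_mkₐ_repIdeal_eq_zero rep₀ π hx).comp
    (Ideal.quotientKerAlgEquivOfSurjective hπ).symm.toAlgHom

variable {π} (hπ : Surjective π)

lemma descendRep_comp :
    (descendRep rep₀ hπ).comp π = (Ideal.Quotient.mkₐ k (repIdeal rep₀ π)).mapMatrix.comp rep₀ := by
  have hsymm : (Ideal.quotientKerAlgEquivOfSurjective hπ).symm.toAlgHom.comp π =
      Ideal.Quotient.mkₐ k (RingHom.ker π) := by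
    ext x
    exact Ideal.quotientKerAlgEquivOfSurjective_symm_apply hπ x
  rw [descendRep, AlgHom.comp_assoc, hsymm]
  exact Ideal.Quotient.liftₐ_comp _ _ _

lemma bijective_mapMatrix_comp_descendRep
    (h : Bijective fun ψ : R₀ →ₐ[k] B => ψ.mapMatrix.comp rep₀) :
    Bijective fun ψ : R₀ ⧸ repIdeal rep₀ π →ₐ[k] B => ψ.mapMatrix.comp (descendRep rep₀ hπ) := by
  have comp_π_eq (ψ : R₀ ⧸ repIdeal rep₀ π →ₐ[k] B) :
      (ψ.mapMatrix.comp (descendRep rep₀ hπ)).comp π =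
        (ψ.comp (Ideal.Quotient.mkₐ k _)).mapMatrix.comp rep₀ := by
    rw [AlgHom.comp_assoc, descendRep_comp, ← AlgHom.comp_assoc, AlgHom.mapMatrix_comp]
  refine ⟨fun ψ₁ ψ₂ hψ => Ideal.Quotient.algHom_ext _ (h.1 ?_), fun ρ => ?_⟩
  · simpa only [comp_π_eq] using congr(($hψ).comp π)
  · obtain ⟨ψ₀, hψ₀⟩ := h.2 (ρ.comp π)
    have hker : repIdeal rep₀ π ≤ RingHom.ker ψ₀ := repIdeal_le_ker rep₀ π ψ₀ fun x hx => by
      simpa [RingHom.mem_ker.mp hx] using congr($hψ₀ x)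
    refine ⟨Ideal.Quotient.liftₐ _ ψ₀ fun _ hr => RingHom.mem_ker.mp (hker hr), (AlgHom.cancel_right hπ).mp ?_⟩
    rw [comp_π_eq, Ideal.Quotient.liftₐ_comp]
    exact hψ₀

end Descent

end RepScheme

open RepScheme

theorem rep_scheme_representable_general
    (k : Type) [Field k] (A : Type) [Ring A] [Algebra k A]
    (hA : Algebra.FiniteType k A) (n : ℕ) :
    ∃ (R : Type) (_ : CommRing R) (_ : Algebra k R),
      Algebra.FiniteType k R ∧
      ∃ rep : A →ₐ[k] Matrix (Fin n) (Fin n) R,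
        ∀ (B : Type) [CommRing B] [Algebra k B]
          (ρ : A →ₐ[k] Matrix (Fin n) (Fin n) B),
          ∃! ψ : R →ₐ[k] B, ∀ a : A, (rep a).map ψ = ρ a := by
  obtain ⟨ι, _, π, hπ⟩ := Algebra.FiniteType.iff_quotient_freeAlgebra'.mp hA
  refine ⟨_, inferInstance, inferInstance, inferInstance,
    descendRep (genericRep k ι (Fin n)) hπ, fun B _ _ ρ => ?_⟩
  have universal := bijective_mapMatrix_comp_descendRep (B := B) (genericRep k ι (Fin n)) hπ
    bijective_mapMatrix_comp_genericRep
  simpa only [AlgHom.ext_iff, AlgHom.comp_apply, AlgHom.mapMatrix_apply] using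
    universal.existsUnique ρ

/-- For a finitely generated `k`-algebra `A` and `n ≥ 1`, the functor
`B ↦ Hom_{k-alg}(A, Matₙ(B))` on commutative `k`-algebras is representable by a
finitely generated commutative `k`-algebra `R = k[Repₙ(A)]`, together with the
universal representation `rep : A → Matₙ(R)`. -/
theorem rep_scheme_representable
    (k : Type) [Field k] (A : Type) [Ring A] [Algebra k A]
    (hA : Algebra.FiniteType k A) (n : ℕ) (hn : 1 ≤ n) :
    ∃ (R : Type) (_ : CommRing R) (_ : Algebra k R),
      Algebra.FiniteType k R ∧
      ∃ rep : A →ₐ[k] Matrix (Fin n) (Fin n) R,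
        ∀ (B : Type) [CommRing B] [Algebra k B]
          (ρ : A →ₐ[k] Matrix (Fin n) (Fin n) B),
          ∃! ψ : R →ₐ[k] B, ∀ a : A, (rep a).map ψ = ρ a :=
  rep_scheme_representable_general k A hA n
end

section
/- Let k be a field, A an associative unital k-algebra, A^e = A ⊗_k A^{op}, and M an A-bimodule (left A^e-module). Let Der(A, M) be the k-vector space of derivations A → M, and let Inn(A, M) ⊆ Der(A, M) be the subspace of inner derivations, i.e., those of the form a ↦ a • m − m • a for some m ∈ M. Then there is a k-linear isomorphism Der(A, M) / Inn(A, M) ≅ Ext¹_{A^e}(A, M), where Ext is computed in the category of left A^e-modules and A is the A^e-module with (a ⊗ b^{op}) • x = a x b. -/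
/- STATEMENT 9: for an `A`-bimodule (= left `Aᵉ = A ⊗ₖ Aᵐᵒᵖ`-module) `M`, there
is a `k`-linear isomorphism `Der(A, M) / Inn(A, M) ≅ Ext¹_{Aᵉ}(A, M)`. -/

open TensorProduct MulOpposite CategoryTheory

noncomputable section

set_option synthInstance.maxHeartbeats 1000000
set_option maxHeartbeats 1000000

variable (k : Type) [Field k] (A : Type) [Ring A] [Algebra k A]

/-- `A` as a module over its enveloping algebra `Aᵉ = A ⊗ₖ Aᵐᵒᵖ` (outer action:
`(a ⊗ bᵒᵖ) • x = a * x * b`). -/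
instance aeModule : Module (A ⊗[k] Aᵐᵒᵖ) A := TensorProduct.Algebra.module

variable (M : Type) [AddCommGroup M] [Module k M] [Module (A ⊗[k] Aᵐᵒᵖ) M]
  [IsScalarTower k (A ⊗[k] Aᵐᵒᵖ) M]

/-- A (`k`-linear) derivation from `A` to the `A`-bimodule `M`:
`δ(a b) = a • δ(b) + δ(a) • b`, where `a • m = (a ⊗ 1) • m` and
`m • b = (1 ⊗ bᵒᵖ) • m`. -/
def IsNCDerivation (δ : A →ₗ[k] M) : Prop :=
  ∀ a b : A, δ (a * b) =
    (a ⊗ₜ[k] (1 : Aᵐᵒᵖ)) • δ b + ((1 : A) ⊗ₜ[k] op b) • δ a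

/-- The `k`-submodule `Der(A, M)` of derivations inside all `k`-linear maps
`A → M`. -/
def ncDer : Submodule k (A →ₗ[k] M) where
  carrier := {δ | IsNCDerivation k A M δ}
  zero_mem' := by intro a b; simp
  add_mem' := by
    intro δ₁ δ₂ h₁ h₂ a b
    simp only [LinearMap.add_apply, h₁ a b, h₂ a b, smul_add]
    abel
  smul_mem' := by
    intro c δ h a b
    simp only [LinearMap.smul_apply, h a b, smul_add]
    rw [smul_comm c, smul_comm c]

/-- The inner derivation attached to `m : M`: `a ↦ a • m - m • a`. -/
def ncInner (m : M) : A →ₗ[k] M where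
  toFun a := (a ⊗ₜ[k] (1 : Aᵐᵒᵖ)) • m - ((1 : A) ⊗ₜ[k] op a) • m
  map_add' a a' := by
    simp only [MulOpposite.op_add, TensorProduct.add_tmul, TensorProduct.tmul_add, add_smul]
    abel
  map_smul' c a := by
    simp only [RingHom.id_apply, MulOpposite.op_smul, TensorProduct.tmul_smul,
      ← TensorProduct.smul_tmul', smul_assoc, smul_sub]

lemma ncInner_isDerivation (m : M) : IsNCDerivation k A M (ncInner k A M m) := by
  intro a b
  simp only [ncInner, LinearMap.coe_mk, AddHom.coe_mk, smul_sub, ← mul_smul,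
    Algebra.TensorProduct.tmul_mul_tmul, one_mul, mul_one, ← op_mul]
  abel

/-- `m ↦ (inner derivation ad m)` as a `k`-linear map `M → Der(A, M)`; its range
is the submodule `Inn(A, M)` of inner derivations. -/
def ncInnerHom : M →ₗ[k] ncDer k A M where
  toFun m := ⟨ncInner k A M m, ncInner_isDerivation k A M m⟩
  map_add' m m' := Subtype.ext <| LinearMap.ext fun a => by
    simp only [ncInner, LinearMap.coe_mk, AddHom.coe_mk, Submodule.coe_add,
      LinearMap.add_apply, smul_add]
    abel
  map_smul' c m := Subtype.ext <| LinearMap.ext fun a => by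
    simp only [ncInner, LinearMap.coe_mk, AddHom.coe_mk, RingHom.id_apply,
      SetLike.val_smul, LinearMap.smul_apply, smul_sub]
    rw [smul_comm _ c, smul_comm _ c]

/-!
Let `μ : Aᵉ → A` be the multiplication and `I = ker μ`. A derivation `δ` extends to the
`k`-linear map `a ⊗ bᵒᵖ ↦ δ(a) b` on `Aᵉ`, which is `Aᵉ`-linear on `I`; conversely an
`Aᵉ`-linear `φ : I → M` gives the derivation `a ↦ φ(a ⊗ 1 - 1 ⊗ aᵒᵖ)`. This identifies
`Der(A, M)` with `Hom_{Aᵉ}(I, M)`, and inner derivations with the restrictions to `I` of maps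
`Aᵉ → M`.

On the Ext side, resolve `A` by a projective resolution `⋯ → P₂ → P₁ → Aᵉ → A` beginning
with `μ`. As `P₂ → P₁ → I → 0` is exact, the 1-cocycles of `Hom(P•, M)` are the maps
`I → M` and the 1-coboundaries are those that extend to `Aᵉ`, so
`Ext¹(A, M) ≅ Hom(I, M) / Hom(Aᵉ, M)|_I`.
-/

universe u

theorem LinearMap.exists_comp_eq_of_surjective_of_ker_le {R X Y Z : Type*} [Ring R]
    [AddCommGroup X] [AddCommGroup Y] [AddCommGroup Z] [Module R X] [Module R Y] [Module R Z]
    {κ : X →ₗ[R] Y} (hκ : Function.Surjective κ) {f : X →ₗ[R] Z}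
    (h : LinearMap.ker κ ≤ LinearMap.ker f) : ∃ φ : Y →ₗ[R] Z, φ ∘ₗ κ = f := by
  refine ⟨(LinearMap.ker κ).liftQ f h ∘ₗ (κ.quotKerEquivOfSurjective hκ).symm.toLinearMap,
    LinearMap.ext fun x => ?_⟩
  have hx : (κ.quotKerEquivOfSurjective hκ).symm (κ x) = Submodule.Quotient.mk x :=
    (LinearEquiv.symm_apply_eq _).2 rfl
  simp only [LinearMap.comp_apply, LinearEquiv.coe_coe, hx, Submodule.liftQ_apply]

theorem TensorProduct.Algebra.isScalarTower {R A B M : Type*} [CommSemiring R]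
    [AddCommMonoid M] [Module R M] [Semiring A] [Semiring B] [Module A M] [Module B M]
    [Algebra R A] [Algebra R B] [IsScalarTower R A M] [IsScalarTower R B M]
    [SMulCommClass A B M] :
    letI := TensorProduct.Algebra.module (R := R) (A := A) (B := B) (M := M)
    IsScalarTower R (A ⊗[R] B) M :=
  letI := TensorProduct.Algebra.module (R := R) (A := A) (B := B) (M := M)
  ⟨fun c x m => by
    induction x using TensorProduct.induction_on with
    | zero => rw [smul_zero, zero_smul, smul_zero]
    | tmul a b =>
      rw [TensorProduct.smul_tmul', TensorProduct.Algebra.smul_def,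
        TensorProduct.Algebra.smul_def, smul_assoc]
    | add x y hx hy => rw [smul_add, add_smul, add_smul, hx, hy, smul_add]⟩

lemma CategoryTheory.Projective.d_comp_self {C : Type*} [Category* C] [Limits.HasZeroMorphisms C]
    [EnoughProjectives C] {X Y : C} (f : X ⟶ Y) [Limits.HasKernel f] : Projective.d f ≫ f = 0 :=
  (Category.assoc _ _ _).trans ((congrArg _ (Limits.kernel.condition f)).trans Limits.comp_zero)

namespace CategoryTheory.ProjectiveResolution

variable {C : Type*} [Category* C] [Abelian C] [EnoughProjectives C] {P X : C} (π : P ⟶ X)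

/-- `ProjectiveResolution.ofComplex X`, started from `π` instead of `Projective.π X`. -/
def ofEpiComplex : ChainComplex C ℕ :=
  ChainComplex.mk' P (Projective.syzygies π) (Projective.d π)
    (fun f => ⟨_, Projective.d f, Projective.d_comp_self f⟩)

lemma ofEpiComplex_d_one_zero : (ofEpiComplex π).d 1 0 = Projective.d π := by
  simp [ofEpiComplex]

lemma ofEpiComplex_d_one_zero_comp : (ofEpiComplex π).d 1 0 ≫ π = 0 := by
  rw [ofEpiComplex_d_one_zero]
  exact Projective.d_comp_self π

lemma ofEpiComplex_exactAt_succ (n : ℕ) : (ofEpiComplex π).ExactAt (n + 1) := by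
  rw [HomologicalComplex.exactAt_iff' _ (n + 1 + 1) (n + 1) n (by simp) (by simp)]
  refine (ShortComplex.exact_iff_of_iso ?_).2 (exact_d_f ((ofEpiComplex π).d (n + 1) n))
  refine ShortComplex.isoMk (ChainComplex.mk'XIso P (Projective.syzygies π) (Projective.d π)
    (fun f => ⟨_, Projective.d f, Projective.d_comp_self f⟩) n) (Iso.refl _) (Iso.refl _) ?_ ?_
  · exact (ChainComplex.mk'_d P (Projective.syzygies π) (Projective.d π) _ n).symm.trans
      (Category.comp_id _).symm
  · exact (Category.id_comp _).trans (Category.comp_id _).symm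

instance [Projective P] (n : ℕ) : Projective ((ofEpiComplex π).X n) := by
  obtain (_ | _ | _ | n) := n
  · assumption
  all_goals apply Projective.projective_over

def ofEpi [Projective P] [Epi π] : ProjectiveResolution X where
  complex := ofEpiComplex π
  π := (ChainComplex.toSingle₀Equiv _ _).symm ⟨π, ofEpiComplex_d_one_zero_comp π⟩
  quasiIso := ⟨fun n => by
    cases n with
    | zero =>
      rw [ChainComplex.quasiIsoAt₀_iff, ShortComplex.quasiIso_iff_of_zeros']
      · refine (ShortComplex.exact_and_epi_g_iff_of_iso ?_).2 ⟨exact_d_f π, inferInstance⟩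
        refine ShortComplex.isoMk (Iso.refl _) (Iso.refl _) (Iso.refl _) ?_ ?_
        · erw [Category.id_comp, Category.comp_id]
          exact (ofEpiComplex_d_one_zero π).symm
        · erw [Category.id_comp, Category.comp_id]
          exact (ChainComplex.toSingle₀Equiv_symm_apply_f_zero (C := ofEpiComplex π) π _).symm
      all_goals rfl
    | succ n =>
      rw [quasiIsoAt_iff_exactAt']
      · apply ofEpiComplex_exactAt_succ
      · apply ChainComplex.exactAt_succ_single_obj⟩

end CategoryTheory.ProjectiveResolution

namespace ModuleCat

open ProjectiveResolution

variable {R : Type u} [Ring R] [Algebra k R] {P X : ModuleCat.{u} R} (π : P ⟶ X)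
  (N : Type u) [AddCommGroup N] [Module k N] [Module R N] [IsScalarTower k R N]

def domRestrictKer : (P →ₗ[R] N) →ₗ[k] (LinearMap.ker π.hom →ₗ[R] N) where
  toFun g := g.domRestrict (LinearMap.ker π.hom)
  map_add' _ _ := rfl
  map_smul' _ _ := rfl

def syzygiesToKer : (ofEpiComplex π).X 1 →ₗ[R] LinearMap.ker π.hom :=
  LinearMap.codRestrict _ ((ofEpiComplex π).d 1 0).hom fun x =>
    congr($(ofEpiComplex_d_one_zero_comp π) x)

lemma syzygiesToKer_surjective : Function.Surjective (syzygiesToKer π) := by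
  rintro ⟨y, hy⟩
  obtain ⟨x, hx⟩ := (ShortComplex.moduleCat_exact_iff _).1 (exact_d_f π) y hy
  refine ⟨x, Subtype.ext ?_⟩
  change ((ofEpiComplex π).d 1 0).hom x = y
  rw [ofEpiComplex_d_one_zero]
  exact hx

lemma ker_syzygiesToKer_le_range :
    LinearMap.ker (syzygiesToKer π) ≤ LinearMap.range ((ofEpiComplex π).d 2 1).hom := by
  have hexact := ((ofEpiComplex π).exactAt_iff' 2 1 0 (by simp) (by simp)).1
    (ofEpiComplex_exactAt_succ π 0)
  intro x hx
  exact (ShortComplex.moduleCat_exact_iff_ker_sub_range _).1 hexact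
    (congrArg Subtype.val (LinearMap.mem_ker.1 hx))

lemma syzygiesToKer_comp_d : syzygiesToKer π ∘ₗ ((ofEpiComplex π).d 2 1).hom = 0 :=
  LinearMap.ext fun x => Subtype.ext congr($((ofEpiComplex π).d_comp_d 2 1 0) x)

abbrev ofEpiHomSc : ShortComplex (ModuleCat k) :=
  ((ofEpiComplex π).linearYonedaObj k (ModuleCat.of R N)).sc' 0 1 2

def cocyclesOfKer : (LinearMap.ker π.hom →ₗ[R] N) →ₗ[k] LinearMap.ker (ofEpiHomSc k π N).g.hom where
  toFun φ := ⟨ofHom (φ ∘ₗ syzygiesToKer π), LinearMap.mem_ker.2 <| hom_ext <| by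
    change (φ ∘ₗ syzygiesToKer π) ∘ₗ ((ofEpiComplex π).d 2 1).hom = 0
    rw [LinearMap.comp_assoc, syzygiesToKer_comp_d, LinearMap.comp_zero]⟩
  map_add' _ _ := rfl
  -- `k` acts on morphisms of `ModuleCat R` through `algebraMap k R`, not through `Module k N`.
  map_smul' c φ := Subtype.ext <| hom_ext <| LinearMap.ext fun x =>
    (algebraMap_smul R c (φ (syzygiesToKer π x))).symm

lemma cocyclesOfKer_injective : Function.Injective (cocyclesOfKer k π N) := by
  intro φ ψ h
  have h' : φ ∘ₗ syzygiesToKer π = ψ ∘ₗ syzygiesToKer π :=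
    congrArg (fun f => Hom.hom (Subtype.val f)) h
  exact (LinearMap.cancel_right (syzygiesToKer_surjective π)).1 h'

lemma cocyclesOfKer_surjective : Function.Surjective (cocyclesOfKer k π N) := by
  rintro ⟨f, hf⟩
  have hf' : f.hom ∘ₗ ((ofEpiComplex π).d 2 1).hom = 0 :=
    congrArg Hom.hom (LinearMap.mem_ker.1 hf)
  obtain ⟨φ, hφ⟩ := LinearMap.exists_comp_eq_of_surjective_of_ker_le
    (syzygiesToKer_surjective π) (f := f.hom) fun x hx => by
      obtain ⟨y, rfl⟩ := ker_syzygiesToKer_le_range π hx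
      exact congr($hf' y)
  exact ⟨φ, Subtype.ext <| hom_ext hφ⟩

def cocyclesEquiv : (LinearMap.ker π.hom →ₗ[R] N) ≃ₗ[k] LinearMap.ker (ofEpiHomSc k π N).g.hom :=
  LinearEquiv.ofBijective _ ⟨cocyclesOfKer_injective k π N, cocyclesOfKer_surjective k π N⟩

lemma cocyclesEquiv_domRestrictKer (g : P ⟶ ModuleCat.of R N) :
    cocyclesEquiv k π N (domRestrictKer k π N g.hom) = (ofEpiHomSc k π N).moduleCatToCycles g :=
  Subtype.ext <| hom_ext <| LinearMap.ext fun _ => rfl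

lemma map_cocyclesEquiv_range_domRestrictKer :
    (LinearMap.range (domRestrictKer k π N)).map (cocyclesEquiv k π N).toLinearMap =
      LinearMap.range (ofEpiHomSc k π N).moduleCatToCycles := by
  apply le_antisymm
  · rintro _ ⟨_, ⟨g, rfl⟩, rfl⟩
    exact ⟨ofHom g, cocyclesEquiv_domRestrictKer k π N (ofHom g)⟩
  · rintro _ ⟨g, rfl⟩
    exact ⟨_, ⟨g.hom, rfl⟩, cocyclesEquiv_domRestrictKer k π N g⟩

def extOneEquivOfEpi [Projective P] [Epi π] :
    ((Ext k (ModuleCat R) 1).obj (Opposite.op X)).obj (ModuleCat.of R N) ≃ₗ[k]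
      (LinearMap.ker π.hom →ₗ[R] N) ⧸ LinearMap.range (domRestrictKer k π N) :=
  ((ofEpi π).isoExt 1 _ ≪≫
    ((ofEpiComplex π).linearYonedaObj k (ModuleCat.of R N)).homologyIsoSc' 0 1 2
      (by simp) (by simp) ≪≫
    (ofEpiHomSc k π N).moduleCatHomologyIso).toLinearEquiv.trans
    (Submodule.Quotient.equiv _ _ (cocyclesEquiv k π N)
      (map_cocyclesEquiv_range_domRestrictKer k π N)).symm

end ModuleCat

section Derivations

def envMul : (A ⊗[k] Aᵐᵒᵖ) →ₗ[A ⊗[k] Aᵐᵒᵖ] A :=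
  LinearMap.toSpanSingleton (A ⊗[k] Aᵐᵒᵖ) A 1

lemma envMul_tmul (a : A) (b : Aᵐᵒᵖ) : envMul k A (a ⊗ₜ[k] b) = a * b.unop := by
  change a * (1 * b.unop) = a * b.unop
  rw [one_mul]

lemma envMul_surjective : Function.Surjective (envMul k A) := fun a =>
  ⟨a ⊗ₜ[k] 1, by rw [envMul_tmul, unop_one, mul_one]⟩

instance : Epi (ModuleCat.ofHom (envMul k A)) :=
  (ModuleCat.epi_iff_surjective _).2 (envMul_surjective k A)

instance : IsScalarTower k (A ⊗[k] Aᵐᵒᵖ) A := TensorProduct.Algebra.isScalarTower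

variable {N : Type} [AddCommGroup N] [Module k N] [Module (A ⊗[k] Aᵐᵒᵖ) N]

lemma IsNCDerivation.map_one {δ : A →ₗ[k] N} (hδ : IsNCDerivation k A N δ) : δ 1 = 0 := by
  have h := hδ 1 1
  rw [mul_one, op_one, ← Algebra.TensorProduct.one_def, one_smul] at h
  exact left_eq_add.1 h

variable [IsScalarTower k (A ⊗[k] Aᵐᵒᵖ) N]

lemma IsNCDerivation.linearMap_comp {δ : A →ₗ[k] N} (hδ : IsNCDerivation k A N δ)
    (φ : N →ₗ[A ⊗[k] Aᵐᵒᵖ] M) : IsNCDerivation k A M (φ.restrictScalars k ∘ₗ δ) := by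
  intro a b
  simp only [LinearMap.comp_apply, LinearMap.restrictScalars_apply, hδ a b, map_add, map_smul]

def universalDerivation : A →ₗ[k] LinearMap.ker (envMul k A) where
  toFun a := ⟨a ⊗ₜ[k] (1 : Aᵐᵒᵖ) - (1 : A) ⊗ₜ[k] op a, by
    rw [LinearMap.mem_ker, map_sub, envMul_tmul, envMul_tmul, unop_one, mul_one, unop_op,
      one_mul, sub_self]⟩
  map_add' a a' := Subtype.ext <| by
    simp only [Submodule.coe_add, MulOpposite.op_add, TensorProduct.add_tmul,
      TensorProduct.tmul_add]
    abel
  map_smul' c a := Subtype.ext <| by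
    simp only [RingHom.id_apply, Submodule.coe_smul_of_tower, op_smul,
      TensorProduct.tmul_smul, ← TensorProduct.smul_tmul', smul_sub]

lemma coe_universalDerivation (a : A) :
    (universalDerivation k A a : A ⊗[k] Aᵐᵒᵖ) = a ⊗ₜ[k] (1 : Aᵐᵒᵖ) - (1 : A) ⊗ₜ[k] op a :=
  rfl

lemma isNCDerivation_universalDerivation :
    IsNCDerivation k A (LinearMap.ker (envMul k A)) (universalDerivation k A) := by
  intro a b
  apply Subtype.ext
  simp only [Submodule.coe_add, Submodule.coe_smul, coe_universalDerivation, smul_eq_mul,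
    mul_sub, Algebra.TensorProduct.tmul_mul_tmul, mul_one, one_mul, op_mul]
  abel

def derivationExt (δ : A →ₗ[k] N) : (A ⊗[k] Aᵐᵒᵖ) →ₗ[k] N :=
  TensorProduct.lift <| LinearMap.mk₂ k (fun a b => ((1 : A) ⊗ₜ[k] b) • δ a)
    (fun a a' b => by rw [map_add, smul_add])
    (fun c a b => by rw [map_smul, smul_comm])
    (fun a b b' => by rw [TensorProduct.tmul_add, add_smul])
    (fun c a b => by rw [TensorProduct.tmul_smul, smul_assoc])

lemma derivationExt_tmul (δ : A →ₗ[k] N) (a : A) (b : Aᵐᵒᵖ) :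
    derivationExt k A δ (a ⊗ₜ[k] b) = ((1 : A) ⊗ₜ[k] b) • δ a := rfl

lemma derivationExt_add (δ δ' : A →ₗ[k] N) :
    derivationExt k A (δ + δ') = derivationExt k A δ + derivationExt k A δ' :=
  TensorProduct.ext' fun a _ => smul_add _ (δ a) (δ' a)

lemma derivationExt_smul (c : k) (δ : A →ₗ[k] N) :
    derivationExt k A (c • δ) = c • derivationExt k A δ :=
  TensorProduct.ext' fun a _ => smul_comm _ c (δ a)

lemma derivationExt_universalDerivation {δ : A →ₗ[k] N} (hδ : IsNCDerivation k A N δ) (a : A) :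
    derivationExt k A δ (universalDerivation k A a) = δ a := by
  rw [coe_universalDerivation, map_sub, derivationExt_tmul, derivationExt_tmul, hδ.map_one,
    smul_zero, sub_zero, ← Algebra.TensorProduct.one_def, one_smul]

/-- The last term vanishes for `x ∈ ker μ`, so `derivationExt δ` is `Aᵉ`-linear there. -/
lemma derivationExt_mul {δ : A →ₗ[k] N} (hδ : IsNCDerivation k A N δ)
    (r x : A ⊗[k] Aᵐᵒᵖ) :
    derivationExt k A δ (r * x) = r • derivationExt k A δ x +
      derivationExt k A δ (r * ((1 : A) ⊗ₜ[k] op (envMul k A x))) := by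
  induction r using TensorProduct.induction_on with
  | zero =>
    rw [zero_mul, map_zero, zero_mul, map_zero, add_zero]
    exact (zero_smul (A ⊗[k] Aᵐᵒᵖ) (derivationExt k A δ x)).symm
  | add r r' hr hr' =>
    simp only [add_mul, map_add, add_smul, hr, hr']
    abel
  | tmul c e =>
    induction x using TensorProduct.induction_on with
    | zero => simp
    | add x y hx hy =>
      simp only [mul_add, map_add, smul_add, MulOpposite.op_add, TensorProduct.tmul_add, hx, hy]
      abel
    | tmul a b =>
      rw [Algebra.TensorProduct.tmul_mul_tmul, envMul_tmul,
        Algebra.TensorProduct.tmul_mul_tmul, derivationExt_tmul, derivationExt_tmul,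
        derivationExt_tmul, hδ c a, smul_add, ← mul_smul, ← mul_smul, ← mul_smul,
        Algebra.TensorProduct.tmul_mul_tmul, Algebra.TensorProduct.tmul_mul_tmul,
        Algebra.TensorProduct.tmul_mul_tmul]
      simp only [one_mul, mul_one, op_mul, op_unop, mul_assoc]

def derivationLift {δ : A →ₗ[k] N} (hδ : IsNCDerivation k A N δ) :
    LinearMap.ker (envMul k A) →ₗ[A ⊗[k] Aᵐᵒᵖ] N where
  toFun x := derivationExt k A δ x
  map_add' x y := map_add _ _ _
  map_smul' r x := by
    have h := derivationExt_mul k A hδ r x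
    rw [LinearMap.mem_ker.1 x.2, op_zero, TensorProduct.tmul_zero, mul_zero, map_zero,
      add_zero] at h
    exact h

def kerProj : (A ⊗[k] Aᵐᵒᵖ) →ₗ[k] LinearMap.ker (envMul k A) where
  toFun y := ⟨y - (1 : A) ⊗ₜ[k] op (envMul k A y), by
    rw [LinearMap.mem_ker, map_sub, envMul_tmul, unop_op, one_mul, sub_self]⟩
  map_add' y y' := Subtype.ext <| by
    simp only [Submodule.coe_add, map_add, MulOpposite.op_add, TensorProduct.tmul_add]
    abel
  map_smul' c y := Subtype.ext <| by
    simp only [RingHom.id_apply, Submodule.coe_smul_of_tower, LinearMap.map_smul_of_tower,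
      op_smul, TensorProduct.tmul_smul, smul_sub]

lemma kerProj_of_mem (x : LinearMap.ker (envMul k A)) : kerProj k A x = x :=
  Subtype.ext <| by
    change (x : A ⊗[k] Aᵐᵒᵖ) - _ = x
    rw [LinearMap.mem_ker.1 x.2, op_zero, TensorProduct.tmul_zero, sub_zero]

lemma derivationExt_comp_universalDerivation
    (φ : LinearMap.ker (envMul k A) →ₗ[A ⊗[k] Aᵐᵒᵖ] N) (y : A ⊗[k] Aᵐᵒᵖ) :
    derivationExt k A (φ.restrictScalars k ∘ₗ universalDerivation k A) y =
      φ (kerProj k A y) := by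
  induction y using TensorProduct.induction_on with
  | zero => simp only [map_zero]
  | add x y hx hy => rw [map_add, map_add, map_add, hx, hy]
  | tmul a b =>
    rw [derivationExt_tmul, LinearMap.comp_apply, LinearMap.restrictScalars_apply, ← map_smul]
    congr 1
    apply Subtype.ext
    change ((1 : A) ⊗ₜ[k] b) * (a ⊗ₜ[k] (1 : Aᵐᵒᵖ) - (1 : A) ⊗ₜ[k] op a) =
      a ⊗ₜ[k] b - (1 : A) ⊗ₜ[k] op (envMul k A (a ⊗ₜ[k] b))
    rw [envMul_tmul, mul_sub, Algebra.TensorProduct.tmul_mul_tmul,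
      Algebra.TensorProduct.tmul_mul_tmul, one_mul, one_mul, mul_one, op_mul, op_unop]

def derivationEquiv : ncDer k A M ≃ₗ[k] (LinearMap.ker (envMul k A) →ₗ[A ⊗[k] Aᵐᵒᵖ] M) where
  toFun δ := derivationLift k A δ.2
  invFun φ := ⟨φ.restrictScalars k ∘ₗ universalDerivation k A,
    (isNCDerivation_universalDerivation k A).linearMap_comp k A M φ⟩
  map_add' δ δ' := LinearMap.ext fun x => congr($(derivationExt_add k A δ.1 δ'.1) x)
  map_smul' c δ := LinearMap.ext fun x => congr($(derivationExt_smul k A c δ.1) x)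
  left_inv δ := Subtype.ext <| LinearMap.ext <| derivationExt_universalDerivation k A δ.2
  right_inv φ := LinearMap.ext fun x =>
    (derivationExt_comp_universalDerivation k A φ x).trans (congrArg φ (kerProj_of_mem k A x))

lemma derivationEquiv_symm_domRestrict_toSpanSingleton (m : M) :
    (derivationEquiv k A M).symm
      ((LinearMap.toSpanSingleton (A ⊗[k] Aᵐᵒᵖ) M m).domRestrict (LinearMap.ker (envMul k A))) =
      ncInnerHom k A M m :=
  Subtype.ext <| LinearMap.ext fun a => sub_smul (a ⊗ₜ[k] (1 : Aᵐᵒᵖ)) ((1 : A) ⊗ₜ[k] op a) m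

lemma map_derivationEquiv_range_ncInnerHom :
    (LinearMap.range (ncInnerHom k A M)).map (derivationEquiv k A M).toLinearMap =
      LinearMap.range (ModuleCat.domRestrictKer k (ModuleCat.ofHom (envMul k A)) M) := by
  have h : (derivationEquiv k A M).toLinearMap ∘ₗ ncInnerHom k A M =
      ModuleCat.domRestrictKer k (ModuleCat.ofHom (envMul k A)) M ∘ₗ
        (LinearMap.ringLmapEquivSelf (A ⊗[k] Aᵐᵒᵖ) k M).symm.toLinearMap := by
    ext m : 1
    rw [LinearMap.comp_apply, ← derivationEquiv_symm_domRestrict_toSpanSingleton,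
      LinearEquiv.coe_coe, LinearEquiv.apply_symm_apply]
    rfl
  rw [← LinearMap.range_comp, h, LinearEquiv.range_comp]

end Derivations

/-- `Der(A,M)/Inn(A,M) ≅ Ext¹_{Aᵉ}(A, M)`, `k`-linearly. -/
theorem outer_derivations_iso_ext_one :
    Nonempty ((↥(ncDer k A M) ⧸ LinearMap.range (ncInnerHom k A M)) ≃ₗ[k]
      (((Ext k (ModuleCat (A ⊗[k] Aᵐᵒᵖ)) 1).obj
        (Opposite.op (ModuleCat.of (A ⊗[k] Aᵐᵒᵖ) A))).obj
          (ModuleCat.of (A ⊗[k] Aᵐᵒᵖ) M))) :=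
  ⟨(Submodule.Quotient.equiv _ _ (derivationEquiv k A M)
      (map_derivationEquiv_range_ncInnerHom k A M)).trans
    (ModuleCat.extOneEquivOfEpi k (ModuleCat.ofHom (envMul k A)) M).symm⟩
end
end

section
/- Let A be an associative unital ring such that every submodule of a projective left A-module is projective (A is hereditary). Then for any natural numbers r, n and any A-linear map f : A^r → A^n between finite rank free left A-modules, the kernel of f is a finitely generated A-module. In particular, every finite rank free left A-module is coherent. -/
universe u

/-- Over a hereditary ring (every submodule of a projective is
projective), the kernel of any map between finite rank free modules is
finitely generated; hence finite rank free modules are coherent. -/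
theorem ker_fg_of_hereditary (A : Type u) [Ring A]
    (h : ∀ (P : Type u) [AddCommGroup P] [Module A P], Module.Projective A P →
      ∀ S : Submodule A P, Module.Projective A S)
    (r n : ℕ) (f : (Fin r → A) →ₗ[A] (Fin n → A)) :
    (LinearMap.ker f).FG := by
  -- The range of f is projective, being a submodule of the projective module A^n.
  have hproj : Module.Projective A (LinearMap.range f) :=
    h (Fin n → A) inferInstance (LinearMap.range f)
  -- Lift the identity of range f along the surjection A^r → range f.
  obtain ⟨s, hs⟩ := Module.projective_lifting_property (R := A)
    f.rangeRestrict (LinearMap.id (R := A) (M := LinearMap.range f))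
    f.surjective_rangeRestrict
  -- p is a projection of A^r onto ker f.
  set p : (Fin r → A) →ₗ[A] (Fin r → A) :=
    LinearMap.id - s.comp f.rangeRestrict with hp
  have hrange : LinearMap.ker f = Submodule.map p ⊤ := by
    ext x
    simp only [Submodule.mem_map, Submodule.mem_top, true_and, LinearMap.mem_ker]
    constructor
    · intro hx
      refine ⟨x, ?_⟩
      have hx' : f.rangeRestrict x = 0 := Subtype.ext hx
      simp [hp, hx']
    · rintro ⟨y, rfl⟩
      have : f.rangeRestrict (p y) = 0 := by
        have h2 := LinearMap.congr_fun hs (f.rangeRestrict y)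
        simp only [LinearMap.comp_apply, LinearMap.id_apply] at h2
        simp only [hp, LinearMap.sub_apply, LinearMap.id_apply, LinearMap.comp_apply, map_sub, h2,
          sub_self]
      have := congrArg (Subtype.val) this
      simpa using this
  rw [hrange]
  exact Submodule.FG.map p (Module.Finite.fg_top (R := A) (M := Fin r → A))
end

section
/- Let A be an associative unital ring, and let e ∈ Mat_n(A) and f ∈ Mat_m(A) be idempotent matrices (e² = e, f² = f). Consider the left A-modules P_e = { v * e : v ∈ A^n } (the range of right multiplication by e on row vectors in A^n = Fin n → A, a submodule for the componentwise left A-action) and P_f ⊆ A^m defined analogously. Then P_e and P_f are isomorphic as left A-modules if and only if the idempotents fromBlocks e 0 0 0 and fromBlocks 0 0 0 f in Mat_{n+m}(A) are conjugate, i.e., there exists an invertible matrix g ∈ GL_{n+m}(A) with g · (fromBlocks e 0 0 0) · g^{-1} = fromBlocks 0 0 0 f. -/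
/-!
Both sides are equivalent to the existence of matrices `a : Mat_{n×m}(A)`, `b : Mat_{m×n}(A)` with
`a * b = e` and `b * a = f`. Precomposing with `v ↦ v * e`, a homomorphism `P_e → P_f` becomes a
linear map `A^n → A^m`, i.e. right multiplication by a matrix; an isomorphism and its inverse give
such `a` and `b`, and conversely `v ↦ v * a` is an isomorphism `P_e ≃ P_f`.

On the other side, `E = diag(e, 0)` and `F = diag(0, f)` are orthogonal idempotents. If `g` conjugates
`E` to `F`, then `x = E g⁻¹`, `y = g E` satisfy `x y = E`, `y x = F`; conversely, once `x`, `y` are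
moved into the corners `E R F` and `F R E` (replace them by `x y x`, `y x y`), the element
`1 - E - F + x + y` is an involution conjugating `E` to `F`. For block matrices, corner elements
are exactly the off-diagonal blocks.
-/

open Matrix

theorem exists_corner_mul_eq_of_mul_eq {R : Type*} [Semigroup R] {E F x y : R}
    (hE : IsIdempotentElem E) (hF : IsIdempotentElem F) (hxy : x * y = E) (hyx : y * x = F) :
    ∃ x' y' : R, E * x' = x' ∧ x' * F = x' ∧ F * y' = y' ∧ y' * E = y' ∧
      x' * y' = E ∧ y' * x' = F := by
  refine ⟨x * y * x, y * x * y, ?_, ?_, ?_, ?_, ?_, ?_⟩ <;> grind [IsIdempotentElem]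

theorem exists_mul_eq_of_units_conj {R : Type*} [Monoid R] {E F : R} (hE : IsIdempotentElem E)
    (g : Rˣ) (hg : g * E * g⁻¹ = F) : ∃ x y : R, x * y = E ∧ y * x = F :=
  ⟨E * g⁻¹, g * E, by simp [mul_assoc, hE.eq],
    by rw [← hg, mul_assoc, ← mul_assoc E, hE.eq, ← mul_assoc]⟩

theorem exists_units_conj_of_mul_eq {R : Type*} [Ring R] {E F x y : R}
    (hEF : E * F = 0) (hFE : F * E = 0)
    (hEx : E * x = x) (hxF : x * F = x) (hFy : F * y = y) (hyE : y * E = y)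
    (hxy : x * y = E) (hyx : y * x = F) : ∃ g : Rˣ, g * E * g⁻¹ = F := by
  have hE : E * E = E := by nth_rw 2 [← hxy]; rw [← mul_assoc, hEx, hxy]
  have hF : F * F = F := by nth_rw 2 [← hyx]; rw [← mul_assoc, hFy, hyx]
  have hxE : x * E = 0 := by rw [← hxF, mul_assoc, hFE, mul_zero]
  have hFx : F * x = 0 := by rw [← hEx, ← mul_assoc, hFE, zero_mul]
  have hyF : y * F = 0 := by rw [← hyE, mul_assoc, hEF, mul_zero]
  have hEy : E * y = 0 := by rw [← hFy, ← mul_assoc, hEF, zero_mul]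
  have hxx : x * x = 0 := by nth_rw 1 [← hxF]; rw [mul_assoc, hFx, mul_zero]
  have hyy : y * y = 0 := by nth_rw 1 [← hyE]; rw [mul_assoc, hEy, mul_zero]
  set g := 1 - E - F + x + y
  have hgg : g * g = 1 := by
    simp only [g, add_mul, mul_add, sub_mul, mul_sub, one_mul, mul_one, hE, hF, hEF, hFE, hEx,
      hxF, hFy, hyE, hxy, hyx, hxE, hFx, hyF, hEy, hxx, hyy]
    abel
  have hgE : g * E = y := by
    simp only [g, add_mul, sub_mul, one_mul, hE, hFE, hxE, hyE]
    abel
  have hEg : E * g = x := by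
    simp only [g, mul_add, mul_sub, mul_one, hE, hEF, hEx, hEy]
    abel
  refine ⟨⟨g, g, hgg, hgg⟩, ?_⟩
  change g * E * g = F
  rw [← hE, ← mul_assoc, hgE, mul_assoc, hEg, hyx]

theorem exists_units_conj_iff_exists_mul_eq {R : Type*} [Ring R] {E F : R}
    (hE : IsIdempotentElem E) (hF : IsIdempotentElem F) (hEF : E * F = 0) (hFE : F * E = 0) :
    (∃ g : Rˣ, g * E * g⁻¹ = F) ↔ ∃ x y : R, x * y = E ∧ y * x = F := by
  refine ⟨fun ⟨g, hg⟩ ↦ exists_mul_eq_of_units_conj hE g hg, fun ⟨x, y, hxy, hyx⟩ ↦ ?_⟩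
  obtain ⟨x, y, hEx, hxF, hFy, hyE, hxy, hyx⟩ := exists_corner_mul_eq_of_mul_eq hE hF hxy hyx
  exact exists_units_conj_of_mul_eq hEF hFE hEx hxF hFy hyE hxy hyx

namespace LinearMap

variable {R M N : Type*} [Semiring R] [AddCommMonoid M] [Module R M] [AddCommMonoid N] [Module R N]
  {p : M →ₗ[R] M} {q : N →ₗ[R] N}

theorem rangeRestrict_coe_of_isIdempotentElem {r : M →ₗ[R] M} (hr : IsIdempotentElem r)
    (x : range r) : r.rangeRestrict x = x :=
  Subtype.ext ((IsIdempotentElem.mem_range_iff hr).mp x.2)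

theorem nonempty_linearEquiv_range_iff (hp : IsIdempotentElem p) (hq : IsIdempotentElem q) :
    Nonempty (range p ≃ₗ[R] range q) ↔
      ∃ (α : M →ₗ[R] N) (β : N →ₗ[R] M), β ∘ₗ α = p ∧ α ∘ₗ β = q := by
  constructor
  · rintro ⟨φ⟩
    refine ⟨(range q).subtype ∘ₗ φ.toLinearMap ∘ₗ p.rangeRestrict,
      (range p).subtype ∘ₗ φ.symm.toLinearMap ∘ₗ q.rangeRestrict, ?_, ?_⟩ <;> ext x
    · simp [rangeRestrict_coe_of_isIdempotentElem hq]
    · simp [rangeRestrict_coe_of_isIdempotentElem hp]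
  · rintro ⟨α, β, hβα, hαβ⟩
    have hpx {x : M} (hx : x ∈ range p) : p x = x := (IsIdempotentElem.mem_range_iff hp).mp hx
    have hqy {y : N} (hy : y ∈ range q) : q y = y := (IsIdempotentElem.mem_range_iff hq).mp hy
    have hα : ∀ x ∈ range p, α x ∈ range q := fun x hx ↦
      ⟨α x, by rw [← hαβ]; change α ((β ∘ₗ α) x) = α x; rw [hβα, hpx hx]⟩
    have hβ : ∀ y ∈ range q, β y ∈ range p := fun y hy ↦
      ⟨β y, by rw [← hβα]; change β ((α ∘ₗ β) y) = β y; rw [hαβ, hqy hy]⟩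
    refine ⟨.ofLinearMap (α.restrict hα) (β.restrict hβ) ?_ ?_⟩ <;> ext ⟨z, hz⟩
    · simpa [← hαβ] using hqy hz
    · simpa [← hβα] using hpx hz

end LinearMap

namespace Matrix

variable {A ι κ : Type*} [Fintype ι] [Fintype κ]

section Semiring

variable [Semiring A]

theorem isIdempotentElem_vecMulLinear {e : Matrix ι ι A} (he : IsIdempotentElem e) :
    IsIdempotentElem e.vecMulLinear :=
  LinearMap.ext fun v ↦ by simp [vecMul_vecMul, he.eq]

theorem isIdempotentElem_fromBlocks₁₁ {e : Matrix ι ι A} (he : IsIdempotentElem e) :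
    IsIdempotentElem (fromBlocks e 0 0 0 : Matrix (ι ⊕ κ) (ι ⊕ κ) A) := by
  simp [IsIdempotentElem, fromBlocks_multiply, he.eq]

theorem isIdempotentElem_fromBlocks₂₂ {f : Matrix κ κ A} (hf : IsIdempotentElem f) :
    IsIdempotentElem (fromBlocks 0 0 0 f : Matrix (ι ⊕ κ) (ι ⊕ κ) A) := by
  simp [IsIdempotentElem, fromBlocks_multiply, hf.eq]

theorem fromBlocks₁₁_mul_mul_fromBlocks₂₂ (e : Matrix ι ι A) (f : Matrix κ κ A)
    (x : Matrix (ι ⊕ κ) (ι ⊕ κ) A) :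
    fromBlocks e 0 0 0 * x * fromBlocks 0 0 0 f = fromBlocks 0 (e * x.toBlocks₁₂ * f) 0 0 := by
  conv_lhs => rw [← fromBlocks_toBlocks x]
  simp [fromBlocks_multiply]

theorem fromBlocks₂₂_mul_mul_fromBlocks₁₁ (e : Matrix ι ι A) (f : Matrix κ κ A)
    (y : Matrix (ι ⊕ κ) (ι ⊕ κ) A) :
    fromBlocks 0 0 0 f * y * fromBlocks e 0 0 0 = fromBlocks 0 0 (f * y.toBlocks₂₁ * e) 0 := by
  conv_lhs => rw [← fromBlocks_toBlocks y]
  simp [fromBlocks_multiply]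

theorem exists_mul_eq_fromBlocks_iff {e : Matrix ι ι A} {f : Matrix κ κ A}
    (he : IsIdempotentElem e) (hf : IsIdempotentElem f) :
    (∃ x y : Matrix (ι ⊕ κ) (ι ⊕ κ) A,
        x * y = fromBlocks e 0 0 0 ∧ y * x = fromBlocks 0 0 0 f) ↔
      ∃ (a : Matrix ι κ A) (b : Matrix κ ι A), a * b = e ∧ b * a = f := by
  constructor
  · rintro ⟨x, y, hxy, hyx⟩
    obtain ⟨x, y, hEx, hxF, hFy, hyE, hxy, hyx⟩ := exists_corner_mul_eq_of_mul_eq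
      (isIdempotentElem_fromBlocks₁₁ he) (isIdempotentElem_fromBlocks₂₂ hf) hxy hyx
    have hx := fromBlocks₁₁_mul_mul_fromBlocks₂₂ e f x
    have hy := fromBlocks₂₂_mul_mul_fromBlocks₁₁ e f y
    rw [hEx, hxF] at hx
    rw [hFy, hyE] at hy
    rw [hx, hy, fromBlocks_multiply] at hxy hyx
    refine ⟨e * x.toBlocks₁₂ * f, f * y.toBlocks₂₁ * e, ?_, ?_⟩
    · simpa using congrArg toBlocks₁₁ hxy
    · simpa using congrArg toBlocks₂₂ hyx
  · rintro ⟨a, b, hab, hba⟩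
    exact ⟨fromBlocks 0 a 0 0, fromBlocks 0 0 b 0, by simp [fromBlocks_multiply, hab],
      by simp [fromBlocks_multiply, hba]⟩

variable [DecidableEq ι] [DecidableEq κ]

theorem nonempty_linearEquiv_range_vecMulLinear_iff {e : Matrix ι ι A} {f : Matrix κ κ A}
    (he : IsIdempotentElem e) (hf : IsIdempotentElem f) :
    Nonempty (LinearMap.range e.vecMulLinear ≃ₗ[A] LinearMap.range f.vecMulLinear) ↔
      ∃ (a : Matrix ι κ A) (b : Matrix κ ι A), a * b = e ∧ b * a = f := by
  rw [LinearMap.nonempty_linearEquiv_range_iff (isIdempotentElem_vecMulLinear he)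
    (isIdempotentElem_vecMulLinear hf)]
  constructor
  · rintro ⟨α, β, hβα, hαβ⟩
    refine ⟨α.toMatrixRight', β.toMatrixRight', ?_, ?_⟩
    · rw [← LinearMap.toMatrixRight'_comp, hβα]
      exact LinearMap.toMatrixRight'.apply_symm_apply e
    · rw [← LinearMap.toMatrixRight'_comp, hαβ]
      exact LinearMap.toMatrixRight'.apply_symm_apply f
  · rintro ⟨a, b, hab, hba⟩
    exact ⟨a.vecMulLinear, b.vecMulLinear, LinearMap.ext fun v ↦ by simp [← hab, vecMul_vecMul],
      LinearMap.ext fun v ↦ by simp [← hba, vecMul_vecMul]⟩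

end Semiring

theorem exists_units_conj_fromBlocks_iff [Ring A] [DecidableEq ι] [DecidableEq κ]
    {e : Matrix ι ι A} {f : Matrix κ κ A} (he : IsIdempotentElem e) (hf : IsIdempotentElem f) :
    (∃ g : (Matrix (ι ⊕ κ) (ι ⊕ κ) A)ˣ,
        g.val * fromBlocks e 0 0 0 * (g⁻¹).val = fromBlocks 0 0 0 f) ↔
      ∃ (a : Matrix ι κ A) (b : Matrix κ ι A), a * b = e ∧ b * a = f := by
  rw [exists_units_conj_iff_exists_mul_eq (isIdempotentElem_fromBlocks₁₁ he)
    (isIdempotentElem_fromBlocks₂₂ hf) (by simp [fromBlocks_multiply])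
    (by simp [fromBlocks_multiply]), exists_mul_eq_fromBlocks_iff he hf]

end Matrix

/-- For idempotent matrices `e ∈ Matₙ(A)`, `f ∈ Matₘ(A)`,
the left `A`-modules `Pₑ = {v * e}` and `P_f = {w * f}` are isomorphic iff the
block idempotents `diag(e,0)` and `diag(0,f)` are conjugate in `GL_{n+m}(A)`. -/
theorem idempotent_ranges_iso_iff_conjugate (A : Type*) [Ring A] (n m : ℕ)
    (e : Matrix (Fin n) (Fin n) A) (he : e * e = e)
    (f : Matrix (Fin m) (Fin m) A) (hf : f * f = f) :
    Nonempty
      (↥(LinearMap.range e.vecMulLinear) ≃ₗ[A] ↥(LinearMap.range f.vecMulLinear)) ↔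
    ∃ g : (Matrix (Fin n ⊕ Fin m) (Fin n ⊕ Fin m) A)ˣ,
      g.val * Matrix.fromBlocks e 0 0 0 * (g⁻¹).val = Matrix.fromBlocks 0 0 0 f := by
  rw [nonempty_linearEquiv_range_vecMulLinear_iff he hf, exists_units_conj_fromBlocks_iff he hf]
end

section
/- Let k be a field and P an associative unital k-algebra equipped with a k-bilinear bracket {−,−} : P × P → P which is a Lie bracket (alternating and satisfying the Jacobi identity) and satisfies the Leibniz rule {a, b·c} = b·{a, c} + {a, b}·c for all a, b, c ∈ P (i.e., P is a noncommutative Poisson algebra). Then for all a, b, c, d, u ∈ P one has {a, b} · u · [c, d] = [a, b] · u · {c, d}, where [x, y] = x·y − y·x denotes the commutator for the associative product. -/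
/-- In a noncommutative Poisson algebra,
`{a,b} · u · [c,d] = [a,b] · u · {c,d}`. -/
theorem nc_poisson_bracket_commutator_identity
    (k : Type*) [Field k] (P : Type*) [Ring P] [Algebra k P]
    (br : P →ₗ[k] P →ₗ[k] P)
    (halt : ∀ a : P, br a a = 0)
    (hjac : ∀ a b c : P, br a (br b c) = br (br a b) c + br b (br a c))
    (hleib : ∀ a b c : P, br a (b * c) = b * br a c + br a b * c) :
    ∀ a b c d u : P,
      br a b * u * (c * d - d * c) = (a * b - b * a) * u * br c d := by
  have hskew : ∀ x y : P, br x y = - br y x := by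
    intro x y
    have h := halt (x + y)
    simp only [map_add, LinearMap.add_apply, halt, zero_add, add_zero] at h
    exact eq_neg_of_add_eq_zero_right h
  have e1 : ∀ x y z : P, br (x * y) z = x * br y z + br x z * y := by
    intro x y z
    rw [hskew (x * y) z, hleib z x y, hskew z y, hskew z x]
    noncomm_ring
  have key : ∀ a b c d : P, br a b * (c * d - d * c) = (a * b - b * a) * br c d := by
    intro a b c d
    have h1 : br (a * c) (b * d)
        = b * (a * br c d + br a d * c) + (a * br c b + br a b * c) * d := by
      rw [hleib (a * c) b d, e1 a c d, e1 a c b]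
    have h2 : br (a * c) (b * d)
        = a * (b * br c d + br c b * d) + (b * br a d + br a b * d) * c := by
      rw [e1 a c (b * d), hleib c b d, hleib a b d]
    have E := h1.symm.trans h2
    rw [← sub_eq_zero]
    calc br a b * (c * d - d * c) - (a * b - b * a) * br c d
        = (b * (a * br c d + br a d * c) + (a * br c b + br a b * c) * d)
          - (a * (b * br c d + br c b * d) + (b * br a d + br a b * d) * c) := by
          noncomm_ring
      _ = 0 := sub_eq_zero.mpr E
  intro a b c d u
  have h1 := key a b (u * c) d
  rw [e1 u c d] at h1
  have h2 := congrArg (· * c) (key a b u d)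
  rw [← sub_eq_zero]
  calc br a b * u * (c * d - d * c) - (a * b - b * a) * u * br c d
      = (br a b * (u * c * d - d * (u * c)) - (a * b - b * a) * (u * br c d + br u d * c))
        - (br a b * (u * d - d * u) * c - (a * b - b * a) * br u d * c) := by
        noncomm_ring
    _ = 0 := by rw [sub_eq_zero.mpr h1, sub_eq_zero.mpr h2, sub_zero]
end
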